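/- Let λ, μ be r-partitions of size n with ζ(λ) ≠ ζ(μ). If CT_0(λ,ν) = ∅ for every r-partition ν of size n with ζ(ν) = ζ(μ) and ν > μ in dominance, then β_{λμ} = #CT_0(λ,μ). -/
import Mathlib


open scoped BigOperators

namespace CQSA

/-- A box of a multidiagram: component `k`, row `i`, column `j` (0-indexed column). -/
abbrev Box (r : ℕ) (m : Fin r → ℕ) : Type := Σ k : Fin r, Fin (m k) × ℕ

/-- An entry of a tableau: component `c`, letter `a` (0-indexed). -/
abbrev Entry (r : ℕ) (m : Fin r → ℕ) : Type := Σ c : Fin r, Fin (m c)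

/-- Multicompositions with `m k` parts in component `k`. -/
abbrev MComp (r : ℕ) (m : Fin r → ℕ) : Type := (k : Fin r) → Fin (m k) → ℕ

variable {r : ℕ} {m : Fin r → ℕ}

/-- The size `|λ|` of a multicomposition. -/
def size (lam : MComp r m) : ℕ := ∑ k, ∑ i, lam k i

/-- A multicomposition is a multipartition if each component is weakly decreasing. -/
def IsMPartition (lam : MComp r m) : Prop := ∀ k, Antitone (lam k)

/-- `ζ(λ) = (|λ^(1)|, …, |λ^(r)|)`. -/
def zeta (lam : MComp r m) : Fin r → ℕ := fun k => ∑ i, lam k i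

/-- Dominance order: `mu ⊴ lam`. -/
def DomLE (mu lam : MComp r m) : Prop :=
  ∀ (k : Fin r) (i : Fin (m k)),
    ((∑ l ∈ Finset.univ.filter (fun l => l < k), ∑ j, mu l j) +
        ∑ j ∈ Finset.univ.filter (fun j => j ≤ i), mu k j) ≤
      ((∑ l ∈ Finset.univ.filter (fun l => l < k), ∑ j, lam l j) +
        ∑ j ∈ Finset.univ.filter (fun j => j ≤ i), lam k j)

/-- Membership of a box in the diagram `[λ]`. -/
def InDiag (lam : MComp r m) (x : Box r m) : Prop := x.2.2 < lam x.1 x.2.1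

/-- The skew diagram `[λ] \ [ν]` as a predicate on boxes. -/
def SkewD (lamBig lamSmall : MComp r m) (x : Box r m) : Prop :=
  InDiag lamBig x ∧ ¬ InDiag lamSmall x

/-- Order on entries: `(a,c) ≤ (a',c')` iff `c < c'`, or `c = c'` and `a ≤ a'`. -/
def entryLE (e f : Entry r m) : Prop :=
  (e.1 : ℕ) < (f.1 : ℕ) ∨ ((e.1 : ℕ) = (f.1 : ℕ) ∧ (e.2 : ℕ) ≤ (f.2 : ℕ))

/-- Strict order on entries. -/
def entryLT (e f : Entry r m) : Prop :=
  (e.1 : ℕ) < (f.1 : ℕ) ∨ ((e.1 : ℕ) = (f.1 : ℕ) ∧ (e.2 : ℕ) < (f.2 : ℕ))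

/-- Reading order on boxes: `x ⪰ y`, i.e. `x ≻ y` or `x = y`, where
`(i,j,k) ≻ (i',j',k')` iff `k > k'`, or `k = k'` and `j > j'`, or
`k = k'`, `j = j'` and `i < i'`. -/
def BoxGE (x y : Box r m) : Prop :=
  (y.1 : ℕ) < (x.1 : ℕ) ∨
    ((x.1 : ℕ) = (y.1 : ℕ) ∧
      (y.2.2 < x.2.2 ∨ (x.2.2 = y.2.2 ∧ (x.2.1 : ℕ) ≤ (y.2.1 : ℕ))))

/-- Semistandardness of a filling `T` of the set of boxes `D` with weight `mu`. -/
structure IsSST (D : Box r m → Prop) (mu : MComp r m)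
    (T : {x : Box r m // D x} → Entry r m) : Prop where
  comp_le : ∀ x : {x : Box r m // D x}, (x.1.1 : ℕ) ≤ ((T x).1 : ℕ)
  row_weak : ∀ x y : {x : Box r m // D x},
    x.1.1 = y.1.1 → (x.1.2.1 : ℕ) = (y.1.2.1 : ℕ) → x.1.2.2 + 1 = y.1.2.2 →
      entryLE (T x) (T y)
  col_strict : ∀ x y : {x : Box r m // D x},
    x.1.1 = y.1.1 → (x.1.2.1 : ℕ) + 1 = (y.1.2.1 : ℕ) → x.1.2.2 = y.1.2.2 →
      entryLT (T x) (T y)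
  weight : ∀ e : Entry r m, mu e.1 e.2 = Nat.card {x : {x : Box r m // D x} // T x = e}

/-- Singularity of a tableau: every prefix of the component-`c` reading word has
weakly decreasing content, for every `c`. -/
def IsSingular (D : Box r m → Prop) (T : {x : Box r m // D x} → Entry r m) : Prop :=
  ∀ (b : {x : Box r m // D x}) (a : ℕ),
    Nat.card {y : {x : Box r m // D x} //
        (T y).1 = (T b).1 ∧ BoxGE y.1 b.1 ∧ ((T y).2 : ℕ) = a + 1} ≤
      Nat.card {y : {x : Box r m // D x} //
        (T y).1 = (T b).1 ∧ BoxGE y.1 b.1 ∧ ((T y).2 : ℕ) = a}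

/-- The number of semistandard tableaux on the boxes `D` with weight `mu`. -/
noncomputable def nSST (D : Box r m → Prop) (mu : MComp r m) : ℕ :=
  Nat.card {T : {x : Box r m // D x} → Entry r m // IsSST D mu T}

/-- The number of singular semistandard tableaux on the boxes `D` with weight `mu`. -/
noncomputable def nSingSST (D : Box r m → Prop) (mu : MComp r m) : ℕ :=
  Nat.card {T : {x : Box r m // D x} → Entry r m // IsSST D mu T ∧ IsSingular D T}

/-- `#CT₀(λ,μ)`: the number of semistandard tableaux of shape `λ` and weight `μ`. -/
noncomputable def nCT (lam mu : MComp r m) : ℕ := nSST (InDiag lam) mu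

/-- `β_{λμ}`: the number of singular semistandard tableaux of shape `λ` and weight `μ`. -/
noncomputable def beta (lam mu : MComp r m) : ℕ := nSingSST (InDiag lam) mu


/-- The Kostka number `K_{ν μ}`: the number of ordinary semistandard Young
tableaux of shape `ν` (rows indexed by `ℕ`) and weight `μ` (a finite sequence of
nonnegative integers, indexed by the linearly ordered alphabet `ι`). -/
noncomputable def kostka (nu : ℕ → ℕ) {ι : Type} [LinearOrder ι] (mu : ι → ℕ) : ℕ :=
  Nat.card {T : {x : ℕ × ℕ // x.2 < nu x.1} → ι //
    (∀ x y : {x : ℕ × ℕ // x.2 < nu x.1}, x.1.1 = y.1.1 → x.1.2 + 1 = y.1.2 → T x ≤ T y) ∧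
    (∀ x y : {x : ℕ × ℕ // x.2 < nu x.1}, x.1.1 + 1 = y.1.1 → x.1.2 = y.1.2 → T x < T y) ∧
    (∀ a : ι, mu a = Nat.card {x : {x : ℕ × ℕ // x.2 < nu x.1} // T x = a})}

/-- Extension of a finite tuple by zeros. -/
def extF {L : ℕ} (f : Fin L → ℕ) : ℕ → ℕ := fun i => if h : i < L then f ⟨i, h⟩ else 0

/-- The Schur polynomial of the partition `ν` (of size `d`) in `N` variables:
`s_ν(x_1,…,x_N) = ∑_μ K_{νμ} x^μ`. -/
noncomputable def schurP (N d : ℕ) (nu : ℕ → ℕ) : MvPolynomial (Fin N) ℤ :=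
  ∑ f ∈ (Fintype.piFinset fun _ : Fin N => Finset.range (d + 1)) |>.filter
      (fun f => ∑ i, f i = d),
    (kostka nu f : ℤ) • MvPolynomial.monomial (Finsupp.equivFunOnFinite.symm f) 1

/-- `lr` is the family of Littlewood–Richardson coefficients: for all partitions
`α`, `β`, the product of the Schur polynomials `s_α s_β` (in any number `N` of
variables containing the supports) equals `∑_γ lr α β γ • s_γ`, the sum running
over all partitions `γ` of size `|α| + |β|` with at most `N` parts. -/
noncomputable def IsLR (lr : (ℕ → ℕ) → (ℕ → ℕ) → (ℕ → ℕ) → ℕ) : Prop :=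
  ∀ (N : ℕ) (al be : ℕ → ℕ), Antitone al → Antitone be →
    (∀ i, N ≤ i → al i = 0) → (∀ i, N ≤ i → be i = 0) →
    schurP N (∑ i ∈ Finset.range N, al i) al *
        schurP N (∑ i ∈ Finset.range N, be i) be =
      ∑ g ∈ (Fintype.piFinset fun _ : Fin N =>
            Finset.range ((∑ i ∈ Finset.range N, al i) + (∑ i ∈ Finset.range N, be i) + 1)) |>.filter
          (fun g => (∀ i j : Fin N, i ≤ j → g j ≤ g i) ∧
            ∑ i, g i = (∑ i ∈ Finset.range N, al i) + (∑ i ∈ Finset.range N, be i)),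
        (lr al be (extF g) : ℤ) •
          schurP N ((∑ i ∈ Finset.range N, al i) + (∑ i ∈ Finset.range N, be i)) (extF g)

/-- The polynomial `tS_λ(x) = ∑_μ #CT₀(λ,μ) x^μ`, summed over all
`r`-compositions `μ` of size `d`, in the variables `x^{(k)}_i`. -/
noncomputable def tS (d : ℕ) (lam : MComp r m) : MvPolynomial (Entry r m) ℤ :=
  ∑ f ∈ (Fintype.piFinset fun _ : Entry r m => Finset.range (d + 1)) |>.filter
      (fun f => ∑ e, f e = d),
    (nCT lam (fun k i => f ⟨k, i⟩) : ℤ) •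
      MvPolynomial.monomial (Finsupp.equivFunOnFinite.symm f) 1

/-- `S_μ(x) = ∏_k s_{μ^{(k)}}(x^{(k)})`, the product of Schur polynomials. -/
noncomputable def SchurProd (mu : MComp r m) : MvPolynomial (Entry r m) ℤ :=
  ∏ k : Fin r, MvPolynomial.rename (fun i : Fin (m k) => (⟨k, i⟩ : Entry r m))
    (schurP (m k) (∑ i, mu k i) (extF (mu k)))

/-- Membership in `Θ(λ,μ)`: a chain `λ = λ_{⟨r⟩} ⊇ … ⊇ λ_{⟨0⟩} = ∅` of
`r`-partitions with `(λ_{⟨k⟩})^{(k+1)} = ∅` for `1 ≤ k ≤ r-1` and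
`|λ_{⟨k⟩}| - |λ_{⟨k-1⟩}| = |μ^{(k)}|` for `1 ≤ k ≤ r`. -/
def IsTheta (lam mu : MComp r m) (L : Fin (r + 1) → MComp r m) : Prop :=
  (∀ κ, IsMPartition (L κ)) ∧
  L (Fin.last r) = lam ∧
  (∀ (c : Fin r) (i : Fin (m c)), L 0 c i = 0) ∧
  (∀ (k : Fin r) (c : Fin r) (i : Fin (m c)), L k.castSucc c i ≤ L k.succ c i) ∧
  (∀ (k : ℕ) (h : k < r), 1 ≤ k →
    ∀ i : Fin (m ⟨k, h⟩), L ⟨k, Nat.lt_succ_of_lt h⟩ ⟨k, h⟩ i = 0) ∧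
  (∀ k : Fin r, size (L k.succ) = size (L k.castSucc) + ∑ i, mu k i)

/-- The multicomposition `(∅, …, ∅, w, ∅, …, ∅)` concentrated in component `k`. -/
def unitWeight (k : Fin r) (w : Fin (m k) → ℕ) : MComp r m :=
  fun c i => if h : c = k then w (Fin.cast (congrArg m h) i) else 0

/-- The index in `Fin r` of the `j`-th member of the `k`-th block, for blocks of
sizes `rs 0, …, rs (g-1)` with `∑ rs = r`. -/
def blockIdx {g : ℕ} (rs : Fin g → ℕ) (hsum : ∑ l, rs l = r) (k : Fin g) (j : Fin (rs k)) :
    Fin r :=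
  ⟨(∑ l ∈ Finset.univ.filter (fun l => l < k), rs l) + j, by
    classical
    have hj := j.isLt
    have h1 : (∑ l ∈ Finset.univ.filter (fun l => l < k), rs l) + rs k ≤ ∑ l, rs l := by
      have hk : k ∉ Finset.univ.filter (fun l => l < k) := by simp
      have h2 : (∑ l ∈ insert k (Finset.univ.filter (fun l => l < k)), rs l)
          = (∑ l ∈ Finset.univ.filter (fun l => l < k), rs l) + rs k := by
        rw [Finset.sum_insert hk]; ring
      rw [← h2]
      exact Finset.sum_le_sum_of_subset (Finset.subset_univ _)
    omega⟩

/-- The permutation of the variables `x^{(k)}_i` within the `k`-th set induced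
by `σ ∈ S_{m_k}`. -/
def blockPermFun (k : Fin r) (sg : Equiv.Perm (Fin (m k))) : Entry r m → Entry r m :=
  fun e => if h : e.1 = k then ⟨k, sg (Fin.cast (congrArg m h) e.2)⟩ else e

/-! ### Auxiliary development for `beta_eq_nCT` -/

section Aux

open Finset

open scoped Classical

variable {r : ℕ} {m : Fin r → ℕ}

lemma boxGE_refl (x : Box r m) : BoxGE x x := Or.inr ⟨rfl, Or.inr ⟨rfl, le_rfl⟩⟩

lemma boxGE_trans {x y z : Box r m} (h1 : BoxGE x y) (h2 : BoxGE y z) : BoxGE x z := by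
  unfold BoxGE at *; omega

lemma boxGE_total (x y : Box r m) : BoxGE x y ∨ BoxGE y x := by
  unfold BoxGE; omega

lemma box_ext {x y : Box r m} (hk : (x.1 : ℕ) = (y.1 : ℕ)) (hi : (x.2.1 : ℕ) = (y.2.1 : ℕ))
    (hj : x.2.2 = y.2.2) : x = y := by
  obtain ⟨kx, ix, jx⟩ := x; obtain ⟨ky, iy, jy⟩ := y
  dsimp at hk hi hj
  have hkk : kx = ky := Fin.ext hk
  subst hkk; subst hj
  have : ix = iy := Fin.ext hi
  subst this; rfl

lemma boxGE_antisymm {x y : Box r m} (h1 : BoxGE x y) (h2 : BoxGE y x) : x = y := by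
  unfold BoxGE at h1 h2
  exact box_ext (by omega) (by omega) (by omega)

lemma entry_ext {e f : Entry r m} (hc : (e.1 : ℕ) = (f.1 : ℕ)) (ha : (e.2 : ℕ) = (f.2 : ℕ)) :
    e = f := by
  obtain ⟨c, i⟩ := e; obtain ⟨c', i'⟩ := f
  dsimp at hc ha
  have hcc : c = c' := Fin.ext hc
  subst hcc
  have : i = i' := Fin.ext ha
  subst this; rfl

lemma entryLE_trans {e f g : Entry r m} (h1 : entryLE e f) (h2 : entryLE f g) : entryLE e g := by
  unfold entryLE at *; omega

lemma entryLE_entryLT_trans {e f g : Entry r m} (h1 : entryLE e f) (h2 : entryLT f g) :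
    entryLT e g := by
  unfold entryLE entryLT at *; omega

lemma entryLT_entryLE_trans {e f g : Entry r m} (h1 : entryLT e f) (h2 : entryLE f g) :
    entryLT e g := by
  unfold entryLE entryLT at *; omega

lemma part_le_size (lam : MComp r m) (k : Fin r) (i : Fin (m k)) : lam k i ≤ size lam := by
  have h1 : lam k i ≤ ∑ i', lam k i' :=
    Finset.single_le_sum (fun _ _ => Nat.zero_le _) (Finset.mem_univ i)
  have h2 : (∑ i', lam k i') ≤ size lam :=
    Finset.single_le_sum (f := fun k' => ∑ i', lam k' i') (fun _ _ => Nat.zero_le _)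
      (Finset.mem_univ k)
  omega

noncomputable instance diagFintype (lam : MComp r m) : Fintype {x : Box r m // InDiag lam x} := by
  apply Fintype.ofInjective (β := Σ k : Fin r, Fin (m k) × Fin (size lam + 1))
    (fun x => ⟨x.1.1, x.1.2.1, ⟨x.1.2.2, by
      have := x.2; unfold InDiag at this
      have := part_le_size lam x.1.1 x.1.2.1; omega⟩⟩)
  rintro ⟨⟨kx, ix, jx⟩, hx⟩ ⟨⟨ky, iy, jy⟩, hy⟩ hxy
  apply Subtype.ext
  dsimp at hxy
  obtain ⟨hk, h2⟩ := Sigma.mk.inj_iff.1 hxy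
  subst hk
  obtain ⟨h3, h4⟩ := Prod.ext_iff.mp (eq_of_heq h2)
  subst h3
  have hj : jx = jy := congrArg Fin.val h4
  subst hj; rfl

lemma natCard_subtype {α : Type*} [Fintype α] (p : α → Prop) [DecidablePred p] :
    Nat.card {x // p x} = (Finset.univ.filter p).card := by
  rw [Nat.card_eq_fintype_card, Fintype.card_subtype]

lemma exists_boxGE_min {β : Type*} (f : β → Box r m) (s : Finset β) (hs : s.Nonempty) :
    ∃ b ∈ s, ∀ y ∈ s, BoxGE (f y) (f b) := by
  classical
  induction s using Finset.induction_on with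
  | empty => simp at hs
  | @insert x s hx ih =>
    rcases s.eq_empty_or_nonempty with h | h
    · subst h
      exact ⟨x, Finset.mem_insert_self _ _, by
        intro y hy; simp only [Finset.mem_insert, Finset.notMem_empty, or_false] at hy
        subst hy; exact boxGE_refl _⟩
    · obtain ⟨b, hb, hmin⟩ := ih h
      rcases boxGE_total (f x) (f b) with h1 | h1
      · refine ⟨b, Finset.mem_insert_of_mem hb, ?_⟩
        intro y hy
        rcases Finset.mem_insert.1 hy with rfl | hy
        · exact h1
        · exact hmin y hy
      · refine ⟨x, Finset.mem_insert_self _ _, ?_⟩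
        intro y hy
        rcases Finset.mem_insert.1 hy with rfl | hy
        · exact boxGE_refl _
        · exact boxGE_trans (hmin y hy) h1

lemma exists_boxGE_max {β : Type*} (f : β → Box r m) (s : Finset β) (hs : s.Nonempty) :
    ∃ b ∈ s, ∀ y ∈ s, BoxGE (f b) (f y) := by
  classical
  induction s using Finset.induction_on with
  | empty => simp at hs
  | @insert x s hx ih =>
    rcases s.eq_empty_or_nonempty with h | h
    · subst h
      exact ⟨x, Finset.mem_insert_self _ _, by
        intro y hy; simp only [Finset.mem_insert, Finset.notMem_empty, or_false] at hy
        subst hy; exact boxGE_refl _⟩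
    · obtain ⟨b, hb, hmax⟩ := ih h
      rcases boxGE_total (f x) (f b) with h1 | h1
      · refine ⟨x, Finset.mem_insert_self _ _, ?_⟩
        intro y hy
        rcases Finset.mem_insert.1 hy with rfl | hy
        · exact boxGE_refl _
        · exact boxGE_trans h1 (hmax y hy)
      · refine ⟨b, Finset.mem_insert_of_mem hb, ?_⟩
        intro y hy
        rcases Finset.mem_insert.1 hy with rfl | hy
        · exact h1
        · exact hmax y hy

end Aux

section Weights

open Finset
open scoped Classical

variable {r : ℕ} {m : Fin r → ℕ}

/-- Modified weight: one box moved from letter `a+1` to letter `a` in component `c`. -/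
def wmod (w : MComp r m) (c : Fin r) (a : ℕ) : MComp r m := fun k i =>
  if (k : ℕ) = (c : ℕ) ∧ (i : ℕ) = a then w k i + 1
  else if (k : ℕ) = (c : ℕ) ∧ (i : ℕ) = a + 1 then w k i - 1
  else w k i

/-- Sum of all within-component prefix sums; strictly increases under `wmod`. -/
def phi (w : MComp r m) : ℕ :=
  ∑ k, ∑ i, ∑ j ∈ Finset.univ.filter (fun j => j ≤ i), w k j

lemma wmod_apply_ne (w : MComp r m) (c : Fin r) (a : ℕ) {k : Fin r} (hk : (k : ℕ) ≠ (c : ℕ))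
    (i : Fin (m k)) : wmod w c a k i = w k i := by
  unfold wmod
  rw [if_neg (by tauto), if_neg (by tauto)]

lemma sum_wmod (w : MComp r m) (c : Fin r) (a : ℕ) (ia ib : Fin (m c))
    (hia : (ia : ℕ) = a) (hib : (ib : ℕ) = a + 1) (hpos : 1 ≤ w c ib)
    (s : Finset (Fin (m c))) (hcl : ib ∈ s → ia ∈ s) :
    ∑ j ∈ s, wmod w c a c j
      = ∑ j ∈ s, w c j + (if ia ∈ s then 1 else 0) - (if ib ∈ s then 1 else 0) := by
  have hne : ia ≠ ib := by
    intro h; rw [h, hib] at hia; omega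
  have hptw : ∀ j ∈ s, wmod w c a c j =
      if j = ia then w c j + 1 else if j = ib then w c j - 1 else w c j := by
    intro j _
    have hj1 : ((j : ℕ) = a) ↔ j = ia := by
      constructor
      · intro h; exact Fin.ext (by omega)
      · intro h; subst h; omega
    have hj2 : ((j : ℕ) = a + 1) ↔ j = ib := by
      constructor
      · intro h; exact Fin.ext (by omega)
      · intro h; subst h; omega
    simp only [wmod, eq_self_iff_true, true_and, hj1, hj2]
  rw [Finset.sum_congr rfl hptw]
  by_cases hbs : ib ∈ s
  · have has : ia ∈ s := hcl hbs
    have hbs' : ib ∈ s.erase ia := Finset.mem_erase.2 ⟨hne.symm, hbs⟩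
    rw [← Finset.add_sum_erase _ _ has, ← Finset.add_sum_erase _ _ hbs',
      ← Finset.add_sum_erase _ (w c) has, ← Finset.add_sum_erase _ (w c) hbs']
    have hrest : ∑ j ∈ (s.erase ia).erase ib,
        (if j = ia then w c j + 1 else if j = ib then w c j - 1 else w c j)
        = ∑ j ∈ (s.erase ia).erase ib, w c j := by
      apply Finset.sum_congr rfl
      intro j hj
      have h1 := Finset.mem_erase.1 hj
      have h2 := Finset.mem_erase.1 h1.2
      rw [if_neg h2.1, if_neg h1.1]
    rw [hrest, if_pos has, if_pos hbs]
    rw [if_pos rfl, if_neg (Ne.symm hne), if_pos rfl]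
    omega
  · by_cases has : ia ∈ s
    · rw [← Finset.add_sum_erase _ _ has, ← Finset.add_sum_erase _ (w c) has]
      have hrest : ∑ j ∈ s.erase ia,
          (if j = ia then w c j + 1 else if j = ib then w c j - 1 else w c j)
          = ∑ j ∈ s.erase ia, w c j := by
        apply Finset.sum_congr rfl
        intro j hj
        have h1 := Finset.mem_erase.1 hj
        rw [if_neg h1.1, if_neg (by rintro rfl; exact hbs h1.2)]
      rw [hrest, if_pos has, if_neg hbs, if_pos rfl]
      omega
    · have hrest : ∑ j ∈ s,
          (if j = ia then w c j + 1 else if j = ib then w c j - 1 else w c j)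
          = ∑ j ∈ s, w c j := by
        apply Finset.sum_congr rfl
        intro j hj
        rw [if_neg (by rintro rfl; exact has hj), if_neg (by rintro rfl; exact hbs hj)]
      rw [hrest, if_neg has, if_neg hbs]
      omega


lemma comp_sum_wmod (w : MComp r m) (c : Fin r) (a : ℕ) (ha : a + 1 < m c)
    (hpos : 1 ≤ w c ⟨a + 1, ha⟩) (l : Fin r) :
    ∑ j, wmod w c a l j = ∑ j, w l j := by
  by_cases hl : l = c
  · subst hl
    rw [sum_wmod w l a ⟨a, by omega⟩ ⟨a + 1, ha⟩ rfl rfl hpos Finset.univ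
      (fun _ => Finset.mem_univ _)]
    simp
  · exact Finset.sum_congr rfl fun j _ =>
      wmod_apply_ne w c a (fun h => hl (Fin.ext h)) j

lemma zeta_wmod (w : MComp r m) (c : Fin r) (a : ℕ) (ha : a + 1 < m c)
    (hpos : 1 ≤ w c ⟨a + 1, ha⟩) :
    zeta (wmod w c a) = zeta w := by
  funext k
  exact comp_sum_wmod w c a ha hpos k

lemma prefix_sum_wmod (w : MComp r m) (c : Fin r) (a : ℕ) (ha : a + 1 < m c)
    (hpos : 1 ≤ w c ⟨a + 1, ha⟩) (i : Fin (m c)) :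
    ∑ j ∈ Finset.univ.filter (fun j => j ≤ i), wmod w c a c j
      = (∑ j ∈ Finset.univ.filter (fun j => j ≤ i), w c j)
        + (if (i : ℕ) = a then 1 else 0) := by
  have hmema : ((⟨a, by omega⟩ : Fin (m c)) ∈ Finset.univ.filter (fun j => j ≤ i))
      ↔ a ≤ (i : ℕ) := by
    simp only [Finset.mem_filter, Finset.mem_univ, true_and]
    exact Iff.rfl
  have hmemb : ((⟨a + 1, ha⟩ : Fin (m c)) ∈ Finset.univ.filter (fun j => j ≤ i))
      ↔ a + 1 ≤ (i : ℕ) := by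
    simp only [Finset.mem_filter, Finset.mem_univ, true_and]
    exact Iff.rfl
  rw [sum_wmod w c a ⟨a, by omega⟩ ⟨a + 1, ha⟩ rfl rfl hpos _
    (fun hb => hmema.2 (by have := hmemb.1 hb; omega))]
  by_cases h1 : a + 1 ≤ (i : ℕ)
  · rw [if_pos (hmemb.2 h1), if_pos (hmema.2 (by omega)), if_neg (by omega)]
    omega
  · rw [if_neg (fun hh => h1 (hmemb.1 hh))]
    by_cases h2 : a ≤ (i : ℕ)
    · rw [if_pos (hmema.2 h2), if_pos (by omega)]
      omega
    · rw [if_neg (fun hh => h2 (hmema.1 hh)), if_neg (by omega)]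
      omega

lemma domle_refl (w : MComp r m) : DomLE w w := fun _ _ => le_rfl

lemma domle_trans {u v w : MComp r m} (h1 : DomLE u v) (h2 : DomLE v w) : DomLE u w :=
  fun k i => le_trans (h1 k i) (h2 k i)

lemma domle_wmod (w : MComp r m) (c : Fin r) (a : ℕ) (ha : a + 1 < m c)
    (hpos : 1 ≤ w c ⟨a + 1, ha⟩) : DomLE w (wmod w c a) := by
  intro k i
  have hcross : ∀ l : Fin r, ∑ j, wmod w c a l j = ∑ j, w l j :=
    comp_sum_wmod w c a ha hpos
  have h1 : (∑ l ∈ Finset.univ.filter (fun l => l < k), ∑ j, wmod w c a l j)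
      = ∑ l ∈ Finset.univ.filter (fun l => l < k), ∑ j, w l j :=
    Finset.sum_congr rfl fun l _ => hcross l
  rw [h1]
  by_cases hk : k = c
  · subst hk
    rw [prefix_sum_wmod w k a ha hpos i]
    omega
  · have h2 : (∑ j ∈ Finset.univ.filter (fun j => j ≤ i), wmod w c a k j)
        = ∑ j ∈ Finset.univ.filter (fun j => j ≤ i), w k j :=
      Finset.sum_congr rfl fun j _ => wmod_apply_ne w c a (fun h => hk (Fin.ext h)) j
    rw [h2]

lemma phi_wmod (w : MComp r m) (c : Fin r) (a : ℕ) (ha : a + 1 < m c)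
    (hpos : 1 ≤ w c ⟨a + 1, ha⟩) : phi (wmod w c a) = phi w + 1 := by
  unfold phi
  rw [← Finset.add_sum_erase _ _ (Finset.mem_univ c),
    ← Finset.add_sum_erase _ (fun k => ∑ i, ∑ j ∈ Finset.univ.filter (fun j => j ≤ i), w k j)
      (Finset.mem_univ c)]
  have hrest : ∑ k ∈ Finset.univ.erase c, ∑ i, ∑ j ∈ Finset.univ.filter (fun j => j ≤ i),
      wmod w c a k j
      = ∑ k ∈ Finset.univ.erase c, ∑ i, ∑ j ∈ Finset.univ.filter (fun j => j ≤ i), w k j := by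
    apply Finset.sum_congr rfl
    intro k hk
    apply Finset.sum_congr rfl
    intro i _
    exact Finset.sum_congr rfl fun j _ =>
      wmod_apply_ne w c a (fun h => (Finset.mem_erase.1 hk).1 (Fin.ext h)) j
  rw [hrest]
  have hc : ∑ i, ∑ j ∈ Finset.univ.filter (fun j => j ≤ i), wmod w c a c j
      = (∑ i, ∑ j ∈ Finset.univ.filter (fun j => j ≤ i), w c j) + 1 := by
    have hptw : ∀ i : Fin (m c), (∑ j ∈ Finset.univ.filter (fun j => j ≤ i), wmod w c a c j)
        = (∑ j ∈ Finset.univ.filter (fun j => j ≤ i), w c j)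
          + (if i = (⟨a, by omega⟩ : Fin (m c)) then 1 else 0) := by
      intro i
      rw [prefix_sum_wmod w c a ha hpos i]
      congr 1
      have : ((i : ℕ) = a) ↔ i = (⟨a, by omega⟩ : Fin (m c)) := by
        constructor
        · intro h; exact Fin.ext h
        · intro h; subst h; rfl
      simp only [this]
    rw [Finset.sum_congr rfl (fun i _ => hptw i), Finset.sum_add_distrib,
      Finset.sum_ite_eq' Finset.univ (⟨a, by omega⟩ : Fin (m c)) (fun _ => 1)]
    simp
  rw [hc]
  omega

lemma phi_mono {w v : MComp r m} (h : DomLE w v) (hz : zeta w = zeta v) : phi w ≤ phi v := by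
  unfold phi
  apply Finset.sum_le_sum
  intro k _
  apply Finset.sum_le_sum
  intro i _
  have h1 := h k i
  have h2 : (∑ l ∈ Finset.univ.filter (fun l => l < k), ∑ j, w l j)
      = ∑ l ∈ Finset.univ.filter (fun l => l < k), ∑ j, v l j := by
    apply Finset.sum_congr rfl
    intro l _
    have := congrFun hz l
    exact this
  omega

lemma size_eq_sum_zeta (w : MComp r m) : size w = ∑ k, zeta w k := rfl

end Weights
section Tableau

open Finset
open scoped Classical

variable {r : ℕ} {m : Fin r → ℕ} {lam : MComp r m}

lemma entryLT_le {e f : Entry r m} (h : entryLT e f) : entryLE e f := by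
  unfold entryLT entryLE at *; omega

lemma col_chain {w : MComp r m} {T : {x : Box r m // InDiag lam x} → Entry r m}
    (hlam : IsMPartition lam) (hT : IsSST (InDiag lam) w T)
    (k : Fin r) (j : ℕ) (i i' : Fin (m k)) (h : (i : ℕ) < (i' : ℕ))
    (hx : InDiag lam ⟨k, (i, j)⟩) (hy : InDiag lam ⟨k, (i', j)⟩) :
    entryLT (T ⟨⟨k, (i, j)⟩, hx⟩) (T ⟨⟨k, (i', j)⟩, hy⟩) := by
  obtain ⟨d, hd⟩ : ∃ d, (i' : ℕ) = (i : ℕ) + d + 1 := ⟨(i' : ℕ) - (i : ℕ) - 1, by omega⟩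
  induction d generalizing i' with
  | zero =>
    exact hT.col_strict ⟨⟨k, (i, j)⟩, hx⟩ ⟨⟨k, (i', j)⟩, hy⟩ rfl (by simpa using hd.symm) rfl
  | succ d ih =>
    have hm : (i : ℕ) + d + 1 < m k := by have := i'.isLt; omega
    have hmid : InDiag lam ⟨k, (⟨(i : ℕ) + d + 1, hm⟩, j)⟩ := by
      unfold InDiag at hy ⊢
      have : lam k i' ≤ lam k ⟨(i : ℕ) + d + 1, hm⟩ := hlam k (by
        rw [Fin.le_def]; simp; omega)
      simp only at hy ⊢
      omega
    have hval : ((⟨(i : ℕ) + d + 1, hm⟩ : Fin (m k)) : ℕ) = (i : ℕ) + d + 1 := rfl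
    refine entryLT_entryLE_trans
      (ih ⟨(i : ℕ) + d + 1, hm⟩ (by show (i : ℕ) < (i : ℕ) + d + 1; omega) hmid hval) ?_
    exact entryLT_le (hT.col_strict ⟨⟨k, (⟨(i : ℕ) + d + 1, hm⟩, j)⟩, hmid⟩
      ⟨⟨k, (i', j)⟩, hy⟩ rfl (by show ((i : ℕ) + d + 1) + 1 = (i' : ℕ); omega) rfl)

lemma size_eq_card {w : MComp r m} {T : {x : Box r m // InDiag lam x} → Entry r m}
    (hT : IsSST (InDiag lam) w T) :
    size w = Fintype.card {x : Box r m // InDiag lam x} := by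
  have h2 : size w = ∑ e : Entry r m, w e.1 e.2 := by
    unfold size
    rw [← Finset.univ_sigma_univ, Finset.sum_sigma]
  have h3 := Fintype.card_congr (Equiv.sigmaFiberEquiv T).symm
  rw [Fintype.card_sigma] at h3
  rw [h2, h3]
  apply Finset.sum_congr rfl
  intro e _
  rw [hT.weight e, Nat.card_eq_fintype_card]

lemma phi_le (w : MComp r m) : phi w ≤ (∑ k, m k) * size w := by
  unfold phi
  have h1 : ∀ (k : Fin r) (i : Fin (m k)),
      (∑ j ∈ Finset.univ.filter (fun j => j ≤ i), w k j) ≤ size w := by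
    intro k i
    calc (∑ j ∈ Finset.univ.filter (fun j => j ≤ i), w k j)
        ≤ ∑ j, w k j := Finset.sum_le_sum_of_subset (Finset.filter_subset _ _)
      _ ≤ size w := Finset.single_le_sum (f := fun k' => ∑ i', w k' i')
          (fun _ _ => Nat.zero_le _) (Finset.mem_univ k)
  calc (∑ k, ∑ i, ∑ j ∈ Finset.univ.filter (fun j => j ≤ i), w k j)
      ≤ ∑ k, ∑ _i : Fin (m k), size w :=
        Finset.sum_le_sum fun k _ => Finset.sum_le_sum fun i _ => h1 k i
    _ = ∑ k, m k * size w := by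
        apply Finset.sum_congr rfl
        intro k _
        rw [Finset.sum_const, Finset.card_univ, Fintype.card_fin, smul_eq_mul]
    _ = (∑ k, m k) * size w := by rw [Finset.sum_mul]

lemma isMPartition_of_singular {w : MComp r m} {T : {x : Box r m // InDiag lam x} → Entry r m}
    (hT : IsSST (InDiag lam) w T) (hs : IsSingular (InDiag lam) T) : IsMPartition w := by
  intro k
  have key : ∀ (v : ℕ) (h1 : v + 1 < m k),
      w k ⟨v + 1, h1⟩ ≤ w k ⟨v, by omega⟩ := by
    intro v h1
    by_cases hC : (Finset.univ.filter
        (fun y : {x : Box r m // InDiag lam x} => (T y).1 = k)).Nonempty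
    · obtain ⟨b, hb, hmin⟩ := exists_boxGE_min (fun y => y.1) _ hC
      have hbk : (T b).1 = k := (Finset.mem_filter.1 hb).2
      have hsing := hs b v
      have hset : ∀ (u : ℕ) (hu : u < m k),
          Nat.card {y : {x : Box r m // InDiag lam x} //
            (T y).1 = (T b).1 ∧ BoxGE y.1 b.1 ∧ ((T y).2 : ℕ) = u}
          = Nat.card {y : {x : Box r m // InDiag lam x} // T y = ⟨k, ⟨u, hu⟩⟩} := by
        intro u hu
        apply Nat.card_congr
        apply Equiv.subtypeEquivRight
        intro y
        constructor
        · rintro ⟨h2, h3, h4⟩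
          exact entry_ext (by rw [h2, hbk]) (by simpa using h4)
        · intro h
          refine ⟨by rw [h, hbk], hmin y (Finset.mem_filter.2
            ⟨Finset.mem_univ _, by rw [h]⟩), by rw [h]⟩
      rw [hset (v + 1) h1, hset v (by omega)] at hsing
      have hw1 := hT.weight ⟨k, ⟨v + 1, h1⟩⟩
      have hw2 := hT.weight ⟨k, ⟨v, by omega⟩⟩
      simp only at hw1 hw2
      rw [hw1, hw2]
      exact hsing
    · have hw1 := hT.weight ⟨k, ⟨v + 1, h1⟩⟩
      simp only at hw1
      rw [hw1]
      have : IsEmpty {y : {x : Box r m // InDiag lam x} // T y = ⟨k, ⟨v + 1, h1⟩⟩} := by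
        constructor
        rintro ⟨y, hy⟩
        exact hC ⟨y, Finset.mem_filter.2 ⟨Finset.mem_univ _, by rw [hy]⟩⟩
      rw [Nat.card_of_isEmpty]
      omega
  intro i j hij
  obtain ⟨d, hd⟩ : ∃ d, (j : ℕ) = (i : ℕ) + d := ⟨(j : ℕ) - (i : ℕ), by
    have := hij; rw [Fin.le_def] at this; omega⟩
  induction d generalizing j with
  | zero =>
    have : j = i := Fin.ext (by omega)
    subst this; exact le_rfl
  | succ d ih =>
    have hm2 : (i : ℕ) + d < m k := by have := j.isLt; omega
    have hj' : j = ⟨(i : ℕ) + d + 1, by omega⟩ :=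
      Fin.ext (by show (j : ℕ) = (i : ℕ) + d + 1; omega)
    have h1 : w k j ≤ w k ⟨(i : ℕ) + d, hm2⟩ := by
      rw [hj']
      exact key ((i : ℕ) + d) (by omega)
    exact le_trans h1 (ih (j := ⟨(i : ℕ) + d, hm2⟩)
      (Fin.le_def.mpr (by show (i : ℕ) ≤ (i : ℕ) + d; omega)) rfl)

end Tableau
section Step

open Finset
open scoped Classical

variable {r : ℕ} {m : Fin r → ℕ}

/-- Number of boxes of the tableau `T` with entry in component `c`, letter `a'`,
lying weakly before the box `b` in the reading order. -/
noncomputable def cntW (lam : MComp r m) (T : {x : Box r m // InDiag lam x} → Entry r m)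
    (c : Fin r) (a' : ℕ) (b : Box r m) : ℕ :=
  (Finset.univ.filter (fun y : {x : Box r m // InDiag lam x} =>
    (T y).1 = c ∧ BoxGE y.1 b ∧ ((T y).2 : ℕ) = a')).card

variable {lam : MComp r m} {T : {x : Box r m // InDiag lam x} → Entry r m} {c : Fin r}

lemma cntW_natCard (a' : ℕ) (b : Box r m) :
    Nat.card {y : {x : Box r m // InDiag lam x} //
      (T y).1 = c ∧ BoxGE y.1 b ∧ ((T y).2 : ℕ) = a'}
      = cntW lam T c a' b := by
  unfold cntW
  exact natCard_subtype _

lemma cnt_insert' (a' : ℕ) (b b' : Box r m) (z : {x : Box r m // InDiag lam x})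
    (hzc : (T z).1 = c) (hz : BoxGE z.1 b) (hnz : ¬ BoxGE z.1 b')
    (hiff : ∀ y : {x : Box r m // InDiag lam x}, (T y).1 = c → ((T y).2 : ℕ) = a' → y ≠ z →
      (BoxGE y.1 b ↔ BoxGE y.1 b')) :
    cntW lam T c a' b = cntW lam T c a' b' + (if ((T z).2 : ℕ) = a' then 1 else 0) := by
  unfold cntW
  by_cases hl : ((T z).2 : ℕ) = a'
  · rw [if_pos hl]
    have hset : (Finset.univ.filter (fun y : {x : Box r m // InDiag lam x} =>
        (T y).1 = c ∧ BoxGE y.1 b ∧ ((T y).2 : ℕ) = a'))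
        = insert z (Finset.univ.filter (fun y : {x : Box r m // InDiag lam x} =>
            (T y).1 = c ∧ BoxGE y.1 b' ∧ ((T y).2 : ℕ) = a')) := by
      ext y
      simp only [Finset.mem_filter, Finset.mem_insert, Finset.mem_univ, true_and]
      constructor
      · rintro ⟨h1, h2, h3⟩
        by_cases hy : y = z
        · exact Or.inl hy
        · exact Or.inr ⟨h1, (hiff y h1 h3 hy).1 h2, h3⟩
      · rintro (rfl | ⟨h1, h2, h3⟩)
        · exact ⟨hzc, hz, hl⟩
        · have hy : y ≠ z := by rintro rfl; exact hnz h2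
          exact ⟨h1, (hiff y h1 h3 hy).2 h2, h3⟩
    rw [hset, Finset.card_insert_of_notMem (by
      simp only [Finset.mem_filter, Finset.mem_univ, true_and]
      rintro ⟨_, h2, _⟩
      exact hnz h2)]
  · rw [if_neg hl, add_zero]
    congr 1
    ext y
    simp only [Finset.mem_filter, Finset.mem_univ, true_and]
    constructor
    · rintro ⟨h1, h2, h3⟩
      have hy : y ≠ z := by rintro rfl; exact hl h3
      exact ⟨h1, (hiff y h1 h3 hy).1 h2, h3⟩
    · rintro ⟨h1, h2, h3⟩
      have hy : y ≠ z := by rintro rfl; exact hl h3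
      exact ⟨h1, (hiff y h1 h3 hy).2 h2, h3⟩

lemma cnt_single (b : {x : Box r m // InDiag lam x}) (hbc : (T b).1 = c)
    (hmax : ∀ y : {x : Box r m // InDiag lam x}, (T y).1 = c → BoxGE y.1 b.1 → y = b)
    (a' : ℕ) :
    cntW lam T c a' b.1 = if ((T b).2 : ℕ) = a' then 1 else 0 := by
  unfold cntW
  by_cases hl : ((T b).2 : ℕ) = a'
  · rw [if_pos hl]
    have hset : (Finset.univ.filter (fun y : {x : Box r m // InDiag lam x} =>
        (T y).1 = c ∧ BoxGE y.1 b.1 ∧ ((T y).2 : ℕ) = a')) = {b} := by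
      ext y
      simp only [Finset.mem_filter, Finset.mem_univ, true_and, Finset.mem_singleton]
      constructor
      · rintro ⟨h1, h2, _⟩
        exact hmax y h1 h2
      · rintro rfl
        exact ⟨hbc, boxGE_refl _, hl⟩
    rw [hset, Finset.card_singleton]
  · rw [if_neg hl]
    have hset : (Finset.univ.filter (fun y : {x : Box r m // InDiag lam x} =>
        (T y).1 = c ∧ BoxGE y.1 b.1 ∧ ((T y).2 : ℕ) = a')) = ∅ := by
      ext y
      simp only [Finset.mem_filter, Finset.mem_univ, true_and, Finset.notMem_empty,
        iff_false]
      rintro ⟨h1, h2, h3⟩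
      exact hl ((hmax y h1 h2) ▸ h3)
    rw [hset, Finset.card_empty]

lemma cnt_prev (b : {x : Box r m // InDiag lam x}) (hbc : (T b).1 = c) :
    (∀ a', cntW lam T c a' b.1 = if ((T b).2 : ℕ) = a' then 1 else 0) ∨
    ∃ p : {x : Box r m // InDiag lam x}, (T p).1 = c ∧ BoxGE p.1 b.1 ∧ p ≠ b ∧
      ∀ a', cntW lam T c a' b.1
        = cntW lam T c a' p.1 + (if ((T b).2 : ℕ) = a' then 1 else 0) := by
  set s := Finset.univ.filter (fun y : {x : Box r m // InDiag lam x} =>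
    (T y).1 = c ∧ BoxGE y.1 b.1 ∧ y ≠ b) with hs
  rcases s.eq_empty_or_nonempty with hse | hsne
  · left
    intro a'
    apply cnt_single b hbc
    intro y h1 h2
    by_contra hy
    have hmem : y ∈ s := Finset.mem_filter.2 ⟨Finset.mem_univ _, h1, h2, hy⟩
    rw [hse] at hmem
    simp at hmem
  · right
    obtain ⟨p, hp, hmin⟩ := exists_boxGE_min (fun y => y.1) s hsne
    obtain ⟨_, hpC, hpGE, hpne⟩ := Finset.mem_filter.1 hp
    refine ⟨p, hpC, hpGE, hpne, fun a' => ?_⟩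
    apply cnt_insert' a' b.1 p.1 b hbc (boxGE_refl _)
      (fun h => hpne (Subtype.ext (boxGE_antisymm hpGE h)))
    intro y h1 _ hyne
    constructor
    · intro hge
      exact hmin y (Finset.mem_filter.2 ⟨Finset.mem_univ _, h1, hge, hyne⟩)
    · intro hge
      exact boxGE_trans hge hpGE

lemma col_chain2 {w : MComp r m} (hlam : IsMPartition lam) (hT : IsSST (InDiag lam) w T)
    (x y : {x : Box r m // InDiag lam x})
    (hk : (x.1.1 : ℕ) = (y.1.1 : ℕ)) (hj : x.1.2.2 = y.1.2.2)
    (hi : (x.1.2.1 : ℕ) < (y.1.2.1 : ℕ)) : entryLT (T x) (T y) := by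
  obtain ⟨⟨kx, ix, jx⟩, hx⟩ := x
  obtain ⟨⟨ky, iy, jy⟩, hy⟩ := y
  dsimp at hk hj hi
  have hkk : kx = ky := Fin.ext hk
  subst hkk; subst hj
  exact col_chain hlam hT kx jx ix iy hi hx hy

end Step
section Crystal

open Finset
open scoped Classical

variable {r : ℕ} {m : Fin r → ℕ}

set_option maxHeartbeats 2000000 in
lemma crystal_step {lam w : MComp r m} {T : {x : Box r m // InDiag lam x} → Entry r m}
    (hlam : IsMPartition lam) (hT : IsSST (InDiag lam) w T)
    (hns : ¬ IsSingular (InDiag lam) T) :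
    ∃ (c : Fin r) (a : ℕ) (ha : a + 1 < m c), 1 ≤ w c ⟨a + 1, ha⟩ ∧
      ∃ T' : {x : Box r m // InDiag lam x} → Entry r m,
        IsSST (InDiag lam) (wmod w c a) T' := by
  unfold IsSingular at hns
  push_neg at hns
  obtain ⟨b0, a, hgt⟩ := hns
  set c := (T b0).1 with hc
  rw [cntW_natCard a b0.1, cntW_natCard (a + 1) b0.1] at hgt
  have hCne : (Finset.univ.filter
      (fun y : {x : Box r m // InDiag lam x} => (T y).1 = c)).Nonempty :=
    ⟨b0, Finset.mem_filter.2 ⟨Finset.mem_univ _, hc.symm⟩⟩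
  obtain ⟨bm, hbmmem, hbmmax⟩ := Finset.exists_max_image
    (Finset.univ.filter (fun y : {x : Box r m // InDiag lam x} => (T y).1 = c))
    (fun b2 => (cntW lam T c (a + 1) b2.1 : ℤ) - (cntW lam T c a b2.1 : ℤ)) hCne
  set Dm := (cntW lam T c (a + 1) bm.1 : ℤ) - (cntW lam T c a bm.1 : ℤ) with hDm
  have hDle : ∀ b2 : {x : Box r m // InDiag lam x}, (T b2).1 = c →
      (cntW lam T c (a + 1) b2.1 : ℤ) - (cntW lam T c a b2.1 : ℤ) ≤ Dm :=
    fun b2 hb2 => hbmmax b2 (Finset.mem_filter.2 ⟨Finset.mem_univ _, hb2⟩)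
  have hD1 : 1 ≤ Dm := le_trans (by
    have : (cntW lam T c a b0.1 : ℤ) < cntW lam T c (a + 1) b0.1 := by exact_mod_cast hgt
    omega) (hDle b0 hc.symm)
  obtain ⟨xs, hxsA, hxsmax⟩ := exists_boxGE_max (fun y => y.1)
    ((Finset.univ.filter (fun y : {x : Box r m // InDiag lam x} => (T y).1 = c)).filter
      (fun b2 => (cntW lam T c (a + 1) b2.1 : ℤ) - (cntW lam T c a b2.1 : ℤ) = Dm))
    ⟨bm, Finset.mem_filter.2 ⟨hbmmem, hDm.symm⟩⟩
  have hxsC : (T xs).1 = c := (Finset.mem_filter.1 (Finset.mem_filter.1 hxsA).1).2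
  have hxsCv : ((T xs).1 : ℕ) = (c : ℕ) := congrArg Fin.val hxsC
  have hxsD : (cntW lam T c (a + 1) xs.1 : ℤ) - (cntW lam T c a xs.1 : ℤ) = Dm :=
    (Finset.mem_filter.1 hxsA).2
  have hxsmax' : ∀ y : {x : Box r m // InDiag lam x}, (T y).1 = c →
      (cntW lam T c (a + 1) y.1 : ℤ) - (cntW lam T c a y.1 : ℤ) = Dm → BoxGE xs.1 y.1 :=
    fun y h1 h2 => hxsmax y (Finset.mem_filter.2
      ⟨Finset.mem_filter.2 ⟨Finset.mem_univ _, h1⟩, h2⟩)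
  -- the chosen box has letter `a+1`
  have hlet : ((T xs).2 : ℕ) = a + 1 := by
    by_contra hne
    rcases cnt_prev xs hxsC with h | ⟨p, hpC, hpGE, hpne, hrec⟩
    · have e2 := h (a + 1)
      rw [if_neg hne] at e2
      omega
    · have e1 := hrec a
      have e2 := hrec (a + 1)
      rw [if_neg hne] at e2
      have hdp : (cntW lam T c (a + 1) p.1 : ℤ) - (cntW lam T c a p.1 : ℤ) = Dm := by
        have hple := hDle p hpC
        by_cases hla : ((T xs).2 : ℕ) = a
        · rw [if_pos hla] at e1; omega
        · rw [if_neg hla] at e1; omega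
      have hxsp := hxsmax' p hpC hdp
      exact hpne (Subtype.ext (boxGE_antisymm hpGE hxsp))
  have h5 : ((T xs).2 : ℕ) < m ((T xs).1) := (T xs).2.isLt
  have h6 : m ((T xs).1) = m c := congrArg m hxsC
  have ha : a + 1 < m c := by omega
  have ha0 : a < m c := by omega
  have hev1 : ((⟨c, ⟨a, ha0⟩⟩ : Entry r m).1 : ℕ) = (c : ℕ) := rfl
  have hev2 : ((⟨c, ⟨a, ha0⟩⟩ : Entry r m).2 : ℕ) = a := rfl
  have hTxs : T xs = ⟨c, ⟨a + 1, ha⟩⟩ := entry_ext hxsCv hlet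
  have hpos : 1 ≤ w c ⟨a + 1, ha⟩ := by
    haveI hne : Nonempty {x : {x : Box r m // InDiag lam x} //
        T x = (⟨c, ⟨a + 1, ha⟩⟩ : Entry r m)} := ⟨⟨xs, hTxs⟩⟩
    have hpos' := Nat.card_pos (α := {x : {x : Box r m // InDiag lam x} //
        T x = (⟨c, ⟨a + 1, ha⟩⟩ : Entry r m)})
    have hw' : w c ⟨a + 1, ha⟩ = Nat.card {x : {x : Box r m // InDiag lam x} //
        T x = (⟨c, ⟨a + 1, ha⟩⟩ : Entry r m)} := hT.weight ⟨c, ⟨a + 1, ha⟩⟩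
    omega
  -- Fact (A): the box directly above `xs` does not carry entry `(c, a)`
  have factA : ∀ u : {x : Box r m // InDiag lam x},
      (u.1.1 : ℕ) = (xs.1.1 : ℕ) → (u.1.2.1 : ℕ) + 1 = (xs.1.2.1 : ℕ) →
      u.1.2.2 = xs.1.2.2 → ¬ ((T u).1 = c ∧ ((T u).2 : ℕ) = a) := by
    rintro u hk hi hj ⟨huC, hua⟩
    have hGEux : BoxGE u.1 xs.1 := Or.inr ⟨hk, Or.inr ⟨hj, by omega⟩⟩
    have hnGExu : ¬ BoxGE xs.1 u.1 := by unfold BoxGE; omega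
    have hsplit : ∀ a', cntW lam T c a' xs.1 = cntW lam T c a' u.1
        + (if ((T xs).2 : ℕ) = a' then 1 else 0) := by
      intro a'
      apply cnt_insert' a' xs.1 u.1 xs hxsC (boxGE_refl _) hnGExu
      intro y hyc _ hyne
      have hyne' : ¬((y.1.1 : ℕ) = (xs.1.1 : ℕ) ∧ (y.1.2.1 : ℕ) = (xs.1.2.1 : ℕ)
          ∧ y.1.2.2 = xs.1.2.2) := fun hh => hyne (Subtype.ext (box_ext hh.1 hh.2.1 hh.2.2))
      constructor
      · intro hge
        unfold BoxGE at hge ⊢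
        omega
      · intro hge
        exact boxGE_trans hge hGEux
    have e3 := hsplit a
    have e4 := hsplit (a + 1)
    rw [if_neg (by omega)] at e3
    rw [if_pos hlet] at e4
    rcases cnt_prev u huC with h | ⟨p, hpC, hpGE, hpne, hrec⟩
    · have e1 := h a
      have e2 := h (a + 1)
      rw [if_pos hua] at e1
      rw [if_neg (by omega)] at e2
      omega
    · have e1 := hrec a
      have e2 := hrec (a + 1)
      rw [if_pos hua] at e1
      rw [if_neg (by omega)] at e2
      have hdp : (cntW lam T c (a + 1) p.1 : ℤ) - (cntW lam T c a p.1 : ℤ) = Dm := by omega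
      have hxsp := hxsmax' p hpC hdp
      have hpnexs : p ≠ xs := fun hh => hnGExu (hh ▸ hpGE)
      exact hpnexs (Subtype.ext (boxGE_antisymm (boxGE_trans hpGE hGEux) hxsp))
  -- Fact (B): the box directly to the left of `xs` does not carry entry `(c, a+1)`
  have factB : ∀ y0 : {x : Box r m // InDiag lam x},
      (y0.1.1 : ℕ) = (xs.1.1 : ℕ) → (y0.1.2.1 : ℕ) = (xs.1.2.1 : ℕ) →
      y0.1.2.2 + 1 = xs.1.2.2 → ¬ ((T y0).1 = c ∧ ((T y0).2 : ℕ) = a + 1) := by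
    rintro y0 hk hi hj ⟨hyC, hyl⟩
    have hy0Cv : ((T y0).1 : ℕ) = (c : ℕ) := congrArg Fin.val hyC
    have hGE : BoxGE xs.1 y0.1 := Or.inr ⟨hk.symm, Or.inl (by omega)⟩
    have hny : ¬ BoxGE y0.1 xs.1 := by unfold BoxGE; omega
    have key : ∀ a', a' = a ∨ a' = a + 1 →
        cntW lam T c a' y0.1 = cntW lam T c a' xs.1
          + (if ((T y0).2 : ℕ) = a' then 1 else 0) := by
      intro a' ha'
      apply cnt_insert' a' y0.1 xs.1 y0 hyC (boxGE_refl _) hny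
      intro y hyc hyl' hyne
      have hyCv : ((T y).1 : ℕ) = (c : ℕ) := congrArg Fin.val hyc
      constructor
      · intro hge
        by_contra hnge
        have hyne' : ¬((y.1.1 : ℕ) = (y0.1.1 : ℕ) ∧ (y.1.2.1 : ℕ) = (y0.1.2.1 : ℕ)
            ∧ y.1.2.2 = y0.1.2.2) := fun hh => hyne (Subtype.ext (box_ext hh.1 hh.2.1 hh.2.2))
        have hcase : (y.1.1 : ℕ) = (xs.1.1 : ℕ)
            ∧ ((y.1.2.2 = xs.1.2.2 ∧ (xs.1.2.1 : ℕ) < (y.1.2.1 : ℕ))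
              ∨ (y.1.2.2 + 1 = xs.1.2.2 ∧ (y.1.2.1 : ℕ) < (xs.1.2.1 : ℕ))) := by
          unfold BoxGE at hge hnge
          omega
        rcases hcase.2 with ⟨hjj, hii⟩ | ⟨hjj, hii⟩
        · -- same column as xs, strictly below: entry too large
          have hlt := col_chain2 hlam hT xs y hcase.1.symm hjj.symm hii
          unfold entryLT at hlt
          rcases ha' with h' | h' <;> omega
        · -- column to the left, strictly above y0
          have hlt1 := col_chain2 hlam hT y y0 (hcase.1.trans hk.symm) (by omega) (by omega)
          unfold entryLT at hlt1
          rcases ha' with h' | h'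
          · -- a' = a : the long case
            have hya : ((T y).2 : ℕ) = a := by omega
            have keq : y.1.1 = xs.1.1 := Fin.ext hcase.1
            have hbound : (y.1.2.1 : ℕ) < m (xs.1.1) := by
              have hy5 := y.1.2.1.isLt
              have hy6 : m (y.1.1) = m (xs.1.1) := congrArg m keq
              omega
            have hvdiag : InDiag lam ⟨xs.1.1, (⟨(y.1.2.1 : ℕ), hbound⟩, xs.1.2.2)⟩ := by
              have h7 := xs.2
              unfold InDiag at h7 ⊢
              have h8 : lam xs.1.1 xs.1.2.1 ≤ lam xs.1.1 ⟨(y.1.2.1 : ℕ), hbound⟩ :=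
                hlam xs.1.1 (by
                  rw [Fin.le_def]
                  show (y.1.2.1 : ℕ) ≤ (xs.1.2.1 : ℕ)
                  omega)
              simp only at h7 ⊢
              omega
            set vB : {x : Box r m // InDiag lam x} :=
              ⟨⟨xs.1.1, (⟨(y.1.2.1 : ℕ), hbound⟩, xs.1.2.2)⟩, hvdiag⟩ with hvB
            have hle1 : entryLE (T y) (T vB) := hT.row_weak y vB keq rfl hjj
            have hlt2 : entryLT (T vB) (T xs) := col_chain2 hlam hT vB xs rfl rfl
              (by show (y.1.2.1 : ℕ) < (xs.1.2.1 : ℕ); omega)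
            have hvC : ((T vB).1 : ℕ) = (c : ℕ) ∧ ((T vB).2 : ℕ) = a := by
              unfold entryLE at hle1
              unfold entryLT at hlt2
              constructor <;> omega
            by_cases hlast : (y.1.2.1 : ℕ) + 1 = (xs.1.2.1 : ℕ)
            · exact factA vB rfl hlast rfl ⟨Fin.ext hvC.1, hvC.2⟩
            · have hbound2 : (y.1.2.1 : ℕ) + 1 < m (xs.1.1) := by
                have := xs.1.2.1.isLt
                omega
              have hv'diag : InDiag lam
                  ⟨xs.1.1, (⟨(y.1.2.1 : ℕ) + 1, hbound2⟩, xs.1.2.2)⟩ := by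
                have h7 := xs.2
                unfold InDiag at h7 ⊢
                have h8 : lam xs.1.1 xs.1.2.1 ≤ lam xs.1.1 ⟨(y.1.2.1 : ℕ) + 1, hbound2⟩ :=
                  hlam xs.1.1 (by
                    rw [Fin.le_def]
                    show (y.1.2.1 : ℕ) + 1 ≤ (xs.1.2.1 : ℕ)
                    omega)
                simp only at h7 ⊢
                omega
              set v'B : {x : Box r m // InDiag lam x} :=
                ⟨⟨xs.1.1, (⟨(y.1.2.1 : ℕ) + 1, hbound2⟩, xs.1.2.2)⟩, hv'diag⟩ with hv'B
              have hlt3 : entryLT (T vB) (T v'B) := hT.col_strict vB v'B rfl rfl rfl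
              have hlt4 : entryLT (T v'B) (T xs) := col_chain2 hlam hT v'B xs rfl rfl
                (by show (y.1.2.1 : ℕ) + 1 < (xs.1.2.1 : ℕ); omega)
              unfold entryLT at hlt3 hlt4
              omega
          · -- a' = a + 1 : contradiction directly
            omega
      · intro hge
        exact boxGE_trans hge hGE
    have e1 := key a (Or.inl rfl)
    have e2 := key (a + 1) (Or.inr rfl)
    rw [if_neg (by omega)] at e1
    rw [if_pos hyl] at e2
    have hy0le := hDle y0 hyC
    omega
  -- the modified tableau
  refine ⟨c, a, ha, hpos, fun y => if y = xs then ⟨c, ⟨a, ha0⟩⟩ else T y, ?_, ?_, ?_, ?_⟩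
  · -- comp_le
    intro x
    show (x.1.1 : ℕ) ≤ (((if x = xs then (⟨c, ⟨a, ha0⟩⟩ : Entry r m) else T x)).1 : ℕ)
    by_cases hx : x = xs
    · rw [if_pos hx]
      have h0 := hT.comp_le x
      have hxv : ((T x).1 : ℕ) = (c : ℕ) := by rw [hx]; exact hxsCv
      show (x.1.1 : ℕ) ≤ (c : ℕ)
      omega
    · rw [if_neg hx]
      exact hT.comp_le x
  · -- row_weak
    intro x y hk1 hi1 hj1
    show entryLE (if x = xs then (⟨c, ⟨a, ha0⟩⟩ : Entry r m) else T x)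
      (if y = xs then (⟨c, ⟨a, ha0⟩⟩ : Entry r m) else T y)
    have h0 := hT.row_weak x y hk1 hi1 hj1
    by_cases hx : x = xs
    · by_cases hy : y = xs
      · exfalso
        rw [hx, hy] at hj1
        omega
      · rw [if_pos hx, if_neg hy]
        have hxv1 : ((T x).1 : ℕ) = (c : ℕ) := by rw [hx]; exact hxsCv
        have hxv2 : ((T x).2 : ℕ) = a + 1 := by rw [hx]; exact hlet
        unfold entryLE at h0 ⊢
        omega
    · by_cases hy : y = xs
      · rw [if_neg hx, if_pos hy]
        have hyv1 : ((T y).1 : ℕ) = (c : ℕ) := by rw [hy]; exact hxsCv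
        have hyv2 : ((T y).2 : ℕ) = a + 1 := by rw [hy]; exact hlet
        have hB := factB x (by rw [← hy]; exact congrArg Fin.val hk1)
          (by rw [← hy]; exact hi1) (by rw [← hy]; exact hj1)
        have hB' : ¬(((T x).1 : ℕ) = (c : ℕ) ∧ ((T x).2 : ℕ) = a + 1) :=
          fun hh => hB ⟨Fin.ext hh.1, hh.2⟩
        unfold entryLE at h0 ⊢
        omega
      · rw [if_neg hx, if_neg hy]
        exact h0
  · -- col_strict
    intro x y hk1 hi1 hj1
    show entryLT (if x = xs then (⟨c, ⟨a, ha0⟩⟩ : Entry r m) else T x)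
      (if y = xs then (⟨c, ⟨a, ha0⟩⟩ : Entry r m) else T y)
    have h0 := hT.col_strict x y hk1 hi1 hj1
    by_cases hx : x = xs
    · by_cases hy : y = xs
      · exfalso
        rw [hx, hy] at hi1
        omega
      · rw [if_pos hx, if_neg hy]
        have hxv1 : ((T x).1 : ℕ) = (c : ℕ) := by rw [hx]; exact hxsCv
        have hxv2 : ((T x).2 : ℕ) = a + 1 := by rw [hx]; exact hlet
        unfold entryLT at h0 ⊢
        omega
    · by_cases hy : y = xs
      · rw [if_neg hx, if_pos hy]
        have hyv1 : ((T y).1 : ℕ) = (c : ℕ) := by rw [hy]; exact hxsCv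
        have hyv2 : ((T y).2 : ℕ) = a + 1 := by rw [hy]; exact hlet
        have hA := factA x (by rw [← hy]; exact congrArg Fin.val hk1)
          (by rw [← hy]; exact hi1) (by rw [← hy]; exact hj1)
        have hA' : ¬(((T x).1 : ℕ) = (c : ℕ) ∧ ((T x).2 : ℕ) = a) :=
          fun hh => hA ⟨Fin.ext hh.1, hh.2⟩
        unfold entryLT at h0 ⊢
        omega
      · rw [if_neg hx, if_neg hy]
        exact h0
  · -- weight
    intro e
    show wmod w c a e.1 e.2 = Nat.card {x : {x : Box r m // InDiag lam x} //
      (if x = xs then (⟨c, ⟨a, ha0⟩⟩ : Entry r m) else T x) = e}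
    by_cases he1 : (e.1 : ℕ) = (c : ℕ) ∧ (e.2 : ℕ) = a
    · have hee : e = ⟨c, ⟨a, ha0⟩⟩ := entry_ext he1.1 he1.2
      subst hee
      have hL : wmod w c a (⟨c, ⟨a, ha0⟩⟩ : Entry r m).1
          (⟨c, ⟨a, ha0⟩⟩ : Entry r m).2 = w c ⟨a, ha0⟩ + 1 := by
        unfold wmod
        rw [if_pos ⟨rfl, rfl⟩]
      rw [hL]
      rw [natCard_subtype]
      have hset : (Finset.univ.filter (fun x : {x : Box r m // InDiag lam x} =>
          (if x = xs then (⟨c, ⟨a, ha0⟩⟩ : Entry r m) else T x) = ⟨c, ⟨a, ha0⟩⟩))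
          = insert xs (Finset.univ.filter (fun x : {x : Box r m // InDiag lam x} =>
              T x = ⟨c, ⟨a, ha0⟩⟩)) := by
        ext y
        simp only [Finset.mem_filter, Finset.mem_insert, Finset.mem_univ, true_and]
        by_cases hy : y = xs
        · rw [if_pos hy]
          simp [hy]
        · rw [if_neg hy]
          constructor
          · intro hh; exact Or.inr hh
          · rintro (hh | hh)
            · exact absurd hh hy
            · exact hh
      rw [hset, Finset.card_insert_of_notMem (by
        simp only [Finset.mem_filter, Finset.mem_univ, true_and]
        intro hh
        have : ((T xs).2 : ℕ) = a := by rw [hh]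
        omega)]
      have hw' : w c ⟨a, ha0⟩ = Nat.card {x : {x : Box r m // InDiag lam x} //
          T x = (⟨c, ⟨a, ha0⟩⟩ : Entry r m)} := hT.weight ⟨c, ⟨a, ha0⟩⟩
      rw [natCard_subtype] at hw'
      omega
    · by_cases he2 : (e.1 : ℕ) = (c : ℕ) ∧ (e.2 : ℕ) = a + 1
      · have hee : e = ⟨c, ⟨a + 1, ha⟩⟩ := entry_ext he2.1 he2.2
        subst hee
        have hL : wmod w c a (⟨c, ⟨a + 1, ha⟩⟩ : Entry r m).1
            (⟨c, ⟨a + 1, ha⟩⟩ : Entry r m).2 = w c ⟨a + 1, ha⟩ - 1 := by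
          unfold wmod
          rw [if_neg (by
            rintro ⟨-, hh⟩
            have hval : ((⟨a + 1, ha⟩ : Fin (m c)) : ℕ) = a + 1 := rfl
            omega), if_pos ⟨rfl, rfl⟩]
        rw [hL]
        rw [natCard_subtype]
        have hset : (Finset.univ.filter (fun x : {x : Box r m // InDiag lam x} =>
            (if x = xs then (⟨c, ⟨a, ha0⟩⟩ : Entry r m) else T x) = ⟨c, ⟨a + 1, ha⟩⟩))
            = (Finset.univ.filter (fun x : {x : Box r m // InDiag lam x} =>
                T x = ⟨c, ⟨a + 1, ha⟩⟩)).erase xs := by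
          ext y
          simp only [Finset.mem_filter, Finset.mem_erase, Finset.mem_univ, true_and]
          by_cases hy : y = xs
          · rw [if_pos hy]
            constructor
            · intro hh
              exfalso
              have : a = a + 1 := congrArg (fun ee : Entry r m => (ee.2 : ℕ)) hh
              omega
            · rintro ⟨h1, -⟩
              exact absurd hy h1
          · rw [if_neg hy]
            constructor
            · intro hh; exact ⟨hy, hh⟩
            · rintro ⟨-, hh⟩; exact hh
        have hmemxs : xs ∈ Finset.univ.filter (fun x : {x : Box r m // InDiag lam x} =>
            T x = ⟨c, ⟨a + 1, ha⟩⟩) := Finset.mem_filter.2 ⟨Finset.mem_univ _, hTxs⟩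
        rw [hset, Finset.card_erase_of_mem hmemxs]
        have hw' : w c ⟨a + 1, ha⟩ = Nat.card {x : {x : Box r m // InDiag lam x} //
            T x = (⟨c, ⟨a + 1, ha⟩⟩ : Entry r m)} := hT.weight ⟨c, ⟨a + 1, ha⟩⟩
        rw [natCard_subtype] at hw'
        omega
      · have hL : wmod w c a e.1 e.2 = w e.1 e.2 := by
          unfold wmod
          rw [if_neg he1, if_neg he2]
        have hiff : ∀ x : {x : Box r m // InDiag lam x},
            ((if x = xs then (⟨c, ⟨a, ha0⟩⟩ : Entry r m) else T x) = e) ↔ (T x = e) := by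
          intro x
          by_cases hx : x = xs
          · rw [if_pos hx]
            constructor
            · intro hh
              exfalso
              apply he1
              rw [← hh]
              exact ⟨rfl, rfl⟩
            · intro hh
              exfalso
              apply he2
              rw [← hh, hx]
              exact ⟨hxsCv, hlet⟩
          · rw [if_neg hx]
        rw [hL, hT.weight e]
        exact (Nat.card_congr (Equiv.subtypeEquivRight hiff)).symm

end Crystal
section Descend

open scoped Classical

variable {r : ℕ} {m : Fin r → ℕ}

lemma descend {lam : MComp r m} (hlam : IsMPartition lam) :
    ∀ (N : ℕ) (w : MComp r m) (T : {x : Box r m // InDiag lam x} → Entry r m),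
      IsSST (InDiag lam) w T →
      (∑ k, m k) * Fintype.card {x : Box r m // InDiag lam x} + 1 ≤ phi w + N →
      ∃ (ν : MComp r m) (T' : {x : Box r m // InDiag lam x} → Entry r m),
        IsSST (InDiag lam) ν T' ∧ IsSingular (InDiag lam) T' ∧ DomLE w ν ∧
          zeta ν = zeta w := by
  intro N
  induction N with
  | zero =>
    intro w T hT hb
    exfalso
    have h1 : phi w ≤ (∑ k, m k) * size w := phi_le w
    rw [size_eq_card hT] at h1
    omega
  | succ N ih =>
    intro w T hT hb
    by_cases hsing : IsSingular (InDiag lam) T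
    · exact ⟨w, T, hT, hsing, domle_refl w, rfl⟩
    · obtain ⟨c, a, ha, hpos, T', hT'⟩ := crystal_step hlam hT hsing
      have hphi := phi_wmod w c a ha hpos
      obtain ⟨ν, T'', h1, h2, h3, h4⟩ := ih (wmod w c a) T' hT' (by omega)
      exact ⟨ν, T'', h1, h2, domle_trans (domle_wmod w c a ha hpos) h3,
        h4.trans (zeta_wmod w c a ha hpos)⟩

end Descend
/-- If `ζ(λ) ≠ ζ(μ)` and `CT₀(λ,ν) = ∅` for every `r`-partition `ν` of size `n`
with `ζ(ν) = ζ(μ)` and `ν > μ` in dominance, then `β_{λμ} = #CT₀(λ,μ)`. -/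
theorem beta_eq_nCT (r n : ℕ) (hr : 1 ≤ r) (m : Fin r → ℕ) (hm : ∀ k, n ≤ m k)
    (lam mu : MComp r m) (hlam : IsMPartition lam) (hlams : size lam = n)
    (hmu : IsMPartition mu) (hmus : size mu = n)
    (hz : zeta lam ≠ zeta mu)
    (hempty : ∀ nu : MComp r m, IsMPartition nu → size nu = n → zeta nu = zeta mu →
      DomLE mu nu → nu ≠ mu →
      IsEmpty {T : {x : Box r m // InDiag lam x} → Entry r m // IsSST (InDiag lam) nu T}) :
    beta lam mu = nCT lam mu := by
  unfold beta nCT nSingSST nSST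
  have hall : ∀ T : {x : Box r m // InDiag lam x} → Entry r m,
      IsSST (InDiag lam) mu T → IsSingular (InDiag lam) T := by
    intro T hT
    by_contra hns
    obtain ⟨c, a, ha, hpos, T1, hT1⟩ := crystal_step hlam hT hns
    obtain ⟨ν, T2, h1, h2, h3, h4⟩ := descend hlam
      ((∑ k, m k) * Fintype.card {x : Box r m // InDiag lam x} + 1)
      (wmod mu c a) T1 hT1 (by omega)
    have hνpart : IsMPartition ν := isMPartition_of_singular h1 h2
    have hζ : zeta ν = zeta mu := (h4.trans (zeta_wmod mu c a ha hpos))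
    have hsize : size ν = n := by
      rw [size_eq_sum_zeta, hζ, ← size_eq_sum_zeta, hmus]
    have hdom : DomLE mu ν := domle_trans (domle_wmod mu c a ha hpos) h3
    have hne : ν ≠ mu := by
      intro hh
      have hp1 := phi_wmod mu c a ha hpos
      have hp2 : phi (wmod mu c a) ≤ phi ν := phi_mono h3 h4.symm
      rw [hh] at hp2
      omega
    exact (hempty ν hνpart hsize hζ hdom hne).false ⟨T2, h1⟩
  exact Nat.card_congr (Equiv.subtypeEquivRight
    (fun T => ⟨fun h => h.1, fun h => ⟨h, hall T h⟩⟩))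

end CQSA
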